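/- Let m ≥ 2 be an integer, define h_m : ℕ → ℕ by h_m(a) = |2a − (m+1)|, and let r be the natural number with 2^r ∣ m+1 and 2^{r+1} ∤ m+1. Then for every integer a with 1 ≤ a ≤ m, we have: there exists t ≥ 1 with h_m^[t](a) = a if and only if 2^r ∣ a and 2^{r+1} ∤ a. In other words, the union of all nontrivial fixed sets of the two-digit Kaprekar routine in base m consists exactly of those a·(m−1) with 1 ≤ a ≤ m whose multiplier a has exactly r factors of 2. -/

import Mathlib

/-!
Write `h = h_m` and `2^r ∥ m + 1`. If `d ∣ 2a` then `d ∣ h a ↔ d ∣ m + 1`. Hence each step raises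
the power of 2 dividing a point until it reaches `2^r`, and from then on the exact power is `2^r`;
a periodic point recurs arbitrarily late on its own orbit, so it has exact power `2^r`.
Conversely `h` maps the finite set of such `a ∈ [1, m]` into itself injectively
(`h x = h y` forces `x = y` or `x + y = m + 1`, and the latter sum is divisible by `2^(r+1)`),
so it permutes that set and every point of it is periodic.
-/

open Function Set

theorem Set.InjOn.mem_periodicPts {α : Type*} {f : α → α} {s : Set α} (hf : InjOn f s)
    (hs : s.Finite) (hmaps : MapsTo f s s) {x : α} (hx : x ∈ s) : x ∈ periodicPts f := by
  have : Finite s := hs.to_subtype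
  obtain ⟨n, hn, hper⟩ :=
    Function.mem_periodicPts.mp ((hmaps.restrict_inj.mpr hf).mem_periodicPts ⟨x, hx⟩)
  exact mk_mem_periodicPts hn (hper.map (g := Subtype.val) fun y ↦ hmaps.val_restrict_apply y)

theorem Nat.two_pow_succ_dvd_add {r x y : ℕ} (hx : 2 ^ r ∣ x) (hx' : ¬2 ^ (r + 1) ∣ x)
    (hy : 2 ^ r ∣ y) (hy' : ¬2 ^ (r + 1) ∣ y) : 2 ^ (r + 1) ∣ x + y := by
  obtain ⟨u, rfl⟩ := hx
  obtain ⟨v, rfl⟩ := hy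
  rw [pow_succ] at hx' hy' ⊢
  rw [← mul_add]
  refine mul_dvd_mul_left _ ?_
  have hu : ¬2 ∣ u := fun h ↦ hx' (mul_dvd_mul_left _ h)
  have hv : ¬2 ∣ v := fun h ↦ hy' (mul_dvd_mul_left _ h)
  omega

def kaprekarMap (m a : ℕ) : ℕ := (2 * (a : ℤ) - (m + 1)).natAbs

def kaprekarCycleSet (m r : ℕ) : Set ℕ := {a | a ∈ Icc 1 m ∧ 2 ^ r ∣ a ∧ ¬2 ^ (r + 1) ∣ a}

section

variable {m r a b : ℕ}

theorem kaprekarMap_le (ha₁ : 1 ≤ a) (ha₂ : a ≤ m) : kaprekarMap m a ≤ m := by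
  unfold kaprekarMap; omega

theorem kaprekarMap_eq_iff : kaprekarMap m a = kaprekarMap m b ↔ a = b ∨ a + b = m + 1 := by
  unfold kaprekarMap; omega

theorem kaprekarMap_dvd_iff {d : ℕ} (hd : d ∣ 2 * a) : d ∣ kaprekarMap m a ↔ d ∣ m + 1 := by
  rw [kaprekarMap, ← Int.natCast_dvd, dvd_sub_right (by exact_mod_cast hd)]
  exact_mod_cast Iff.rfl

theorem kaprekarMap_two_pow_succ_dvd {k : ℕ} (ha : 2 ^ k ∣ a) (hm : 2 ^ (k + 1) ∣ m + 1) :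
    2 ^ (k + 1) ∣ kaprekarMap m a :=
  (kaprekarMap_dvd_iff (by rw [pow_succ']; exact mul_dvd_mul_left 2 ha)).mpr hm

theorem kaprekarMap_two_pow_dvd_and_not_dvd (hr₁ : 2 ^ r ∣ m + 1) (hr₂ : ¬2 ^ (r + 1) ∣ m + 1)
    (ha : 2 ^ r ∣ a) : 2 ^ r ∣ kaprekarMap m a ∧ ¬2 ^ (r + 1) ∣ kaprekarMap m a :=
  ⟨(kaprekarMap_dvd_iff (ha.mul_left 2)).mpr hr₁,
    fun h ↦ hr₂ ((kaprekarMap_dvd_iff (by rw [pow_succ']; exact mul_dvd_mul_left 2 ha)).mp h)⟩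

theorem two_pow_min_dvd_kaprekarMap_iterate (hr : 2 ^ r ∣ m + 1) (a j : ℕ) :
    2 ^ min j r ∣ (kaprekarMap m)^[j] a := by
  induction j with
  | zero => simp
  | succ j ih =>
    rw [iterate_succ_apply']
    rcases lt_or_ge j r with hj | hj
    · rw [min_eq_left hj.le] at ih
      rw [min_eq_left (by omega)]
      exact kaprekarMap_two_pow_succ_dvd ih ((pow_dvd_pow 2 hj).trans hr)
    · rw [min_eq_right hj] at ih
      rw [min_eq_right (by omega)]
      exact (kaprekarMap_dvd_iff (ih.mul_left 2)).mpr hr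

theorem kaprekarMap_iterate_two_pow_dvd_and_not_dvd (hr₁ : 2 ^ r ∣ m + 1)
    (hr₂ : ¬2 ^ (r + 1) ∣ m + 1) (a : ℕ) {j : ℕ} (hj : r < j) :
    2 ^ r ∣ (kaprekarMap m)^[j] a ∧ ¬2 ^ (r + 1) ∣ (kaprekarMap m)^[j] a := by
  obtain ⟨i, rfl⟩ : ∃ i, j = i + 1 := ⟨j - 1, by omega⟩
  have hi := two_pow_min_dvd_kaprekarMap_iterate hr₁ a i
  rw [min_eq_right (by omega)] at hi
  rw [iterate_succ_apply']
  exact kaprekarMap_two_pow_dvd_and_not_dvd hr₁ hr₂ hi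

theorem mapsTo_kaprekarMap (hr₁ : 2 ^ r ∣ m + 1) (hr₂ : ¬2 ^ (r + 1) ∣ m + 1) :
    MapsTo (kaprekarMap m) (kaprekarCycleSet m r) (kaprekarCycleSet m r) := by
  rintro a ⟨⟨ha₁, ha₂⟩, ha, -⟩
  obtain ⟨hdvd, hndvd⟩ := kaprekarMap_two_pow_dvd_and_not_dvd hr₁ hr₂ ha
  have hpos : kaprekarMap m a ≠ 0 := fun h ↦ hndvd (h ▸ dvd_zero _)
  exact ⟨⟨Nat.one_le_iff_ne_zero.mpr hpos, kaprekarMap_le ha₁ ha₂⟩, hdvd, hndvd⟩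

theorem injOn_kaprekarMap (hr : ¬2 ^ (r + 1) ∣ m + 1) :
    InjOn (kaprekarMap m) (kaprekarCycleSet m r) := by
  rintro a ⟨-, ha, ha'⟩ b ⟨-, hb, hb'⟩ hab
  refine (kaprekarMap_eq_iff.mp hab).resolve_right fun hsum ↦ hr ?_
  exact hsum ▸ Nat.two_pow_succ_dvd_add ha ha' hb hb'

theorem mem_periodicPts_kaprekarMap_iff (hr₁ : 2 ^ r ∣ m + 1) (hr₂ : ¬2 ^ (r + 1) ∣ m + 1)
    (ha : a ∈ Icc 1 m) :
    a ∈ periodicPts (kaprekarMap m) ↔ 2 ^ r ∣ a ∧ ¬2 ^ (r + 1) ∣ a := by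
  constructor
  · intro hper
    obtain ⟨t, ht, hper⟩ := Function.mem_periodicPts.mp hper
    rw [← (hper.mul_const (r + 1)).eq]
    exact kaprekarMap_iterate_two_pow_dvd_and_not_dvd hr₁ hr₂ a (by nlinarith)
  · intro hdvd
    have hfin : (kaprekarCycleSet m r).Finite := (finite_Icc 1 m).subset fun _ h ↦ h.1
    exact (injOn_kaprekarMap hr₂).mem_periodicPts hfin (mapsTo_kaprekarMap hr₁ hr₂) ⟨ha, hdvd⟩

end

theorem twoDigitKaprekar_union_of_fixed_sets_general (m r : ℕ)
    (hr : 2 ^ r ∣ m + 1 ∧ ¬2 ^ (r + 1) ∣ m + 1)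
    (h : ℕ → ℕ) (hh : ∀ a : ℕ, h a = (2 * (a : ℤ) - (m + 1)).natAbs) :
    ∀ a : ℕ, 1 ≤ a → a ≤ m →
      ((∃ t : ℕ, 1 ≤ t ∧ h^[t] a = a) ↔ (2 ^ r ∣ a ∧ ¬2 ^ (r + 1) ∣ a)) := by
  obtain rfl : h = kaprekarMap m := funext hh
  intro a ha₁ ha₂
  rw [← mem_periodicPts_kaprekarMap_iff hr.1 hr.2 ⟨ha₁, ha₂⟩, Function.mem_periodicPts]
  rfl

/-- For `m ≥ 2` with `2^r ∥ m+1`, with `h_m(a) = |2a - (m+1)|`: a multiplier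
`1 ≤ a ≤ m` is periodic under `h_m` iff `2^r ∥ a`, i.e. the union of all
nontrivial fixed sets consists exactly of the `a·(m-1)` whose multiplier `a`
has exactly `r` factors of 2. -/
theorem twoDigitKaprekar_union_of_fixed_sets (m r : ℕ) (hm : 2 ≤ m)
    (hr : 2 ^ r ∣ m + 1 ∧ ¬2 ^ (r + 1) ∣ m + 1)
    (h : ℕ → ℕ) (hh : ∀ a : ℕ, h a = (2 * (a : ℤ) - (m + 1)).natAbs) :
    ∀ a : ℕ, 1 ≤ a → a ≤ m →
      ((∃ t : ℕ, 1 ≤ t ∧ h^[t] a = a) ↔ (2 ^ r ∣ a ∧ ¬2 ^ (r + 1) ∣ a)) :=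
  twoDigitKaprekar_union_of_fixed_sets_general m r hr h hh
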